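/- arXiv:1005.4374 — 4 statements merged into one kernel-verified Lean document; each statement's English description precedes it below -/
import Mathlib

section
/- Let f : ℕ → ℂ be governed by a minimal LRF of order d, i.e. f satisfies an LRF of order d with a_d ≠ 0 and f satisfies no LRF of order smaller than d. Then for every window length L ≥ d and every i ≥ 0, the d adjacent L-lagged vectors X_i, X_{i+1}, …, X_{i+d−1} of f are linearly independent. -/
/-- A time series `f` satisfies a linear recurrent formula (LRF) of order `t`:
there are coefficients `a 1, …, a t` with `a t ≠ 0` such that
`f (i+t) = ∑_{k=1}^t a k * f (i+t-k)` for all `i ≥ 0`. -/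
def SatisfiesLRF (f : ℕ → ℂ) (t : ℕ) : Prop :=
  ∃ a : ℕ → ℂ, a t ≠ 0 ∧ ∀ i : ℕ, f (i + t) = ∑ k ∈ Finset.Icc 1 t, a k * f (i + t - k)

open Finset

/-- A linear combination of shifts of `f` satisfies the same recurrence as `f`. -/
lemma lrf_comb_rec (f a : ℕ → ℂ) (d : ℕ)
    (hrec : ∀ n, f (n + d) = ∑ k ∈ Icc 1 d, a k * f (n + d - k))
    (b : ℕ → ℂ) (m : ℕ) (n : ℕ) :
    (∑ j ∈ range m, b j * f (n + d + j)) =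
      ∑ k ∈ Icc 1 d, a k * ∑ j ∈ range m, b j * f (n + d - k + j) := by
  have h1 : ∀ j ∈ range m,
      b j * f (n + d + j) = ∑ k ∈ Icc 1 d, b j * (a k * f (n + d - k + j)) := by
    intro j _
    have he : n + d + j = (n + j) + d := by ring
    rw [he, hrec (n + j), Finset.mul_sum]
    refine Finset.sum_congr rfl fun k hk => ?_
    have hk' : k ≤ d := (Finset.mem_Icc.mp hk).2
    have : n + j + d - k = n + d - k + j := by omega
    rw [this]
  rw [Finset.sum_congr rfl h1, Finset.sum_comm]
  refine Finset.sum_congr rfl fun k _ => ?_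
  rw [Finset.mul_sum]
  exact Finset.sum_congr rfl fun j _ => by ring

/-- Backward propagation of zeros through the recurrence. -/
lemma lrf_backward_zero (g a : ℕ → ℂ) (d : ℕ) (hd : 0 < d) (had : a d ≠ 0)
    (hrec : ∀ n, g (n + d) = ∑ k ∈ Icc 1 d, a k * g (n + d - k))
    (N : ℕ) (h0 : ∀ n, N ≤ n → g n = 0) : ∀ n, g n = 0 := by
  have key : ∀ j n, N ≤ n + j → g n = 0 := by
    intro j
    induction j with
    | zero => intro n hn; exact h0 n (by omega)
    | succ j ih =>
      intro n hn
      by_cases hc : N ≤ n + j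
      · exact ih n hc
      · have hup : ∀ p, n + 1 ≤ p → g p = 0 := fun p hp => ih p (by omega)
        have hr := hrec n
        rw [hup (n + d) (by omega)] at hr
        have hdmem : d ∈ Icc 1 d := Finset.mem_Icc.mpr ⟨hd, le_refl d⟩
        have hsum : ∑ k ∈ Icc 1 d, a k * g (n + d - k) = a d * g n := by
          rw [Finset.sum_eq_single_of_mem d hdmem (fun k hk hkd => by
            have hk' := Finset.mem_Icc.mp hk
            rw [hup (n + d - k) (by omega), mul_zero])]
          congr 2
          omega
        rw [hsum] at hr
        exact (mul_eq_zero.mp hr.symm).resolve_left had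
  intro n
  exact key N n (by omega)

/-- Forward propagation of zeros through the recurrence. -/
lemma lrf_forward_zero (g a : ℕ → ℂ) (d : ℕ) (hd : 0 < d)
    (hrec : ∀ n, g (n + d) = ∑ k ∈ Icc 1 d, a k * g (n + d - k))
    (i L : ℕ) (hL : d ≤ L) (h0 : ∀ l, l < L → g (i + l) = 0) :
    ∀ n, i ≤ n → g n = 0 := by
  have key : ∀ m, g (i + m) = 0 := by
    intro m
    induction m using Nat.strong_induction_on with
    | _ m ih =>
      by_cases hm : m < L
      · exact h0 m hm
      · have hmd : d ≤ m := by omega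
        have heq : i + m = (i + (m - d)) + d := by omega
        rw [heq, hrec]
        refine Finset.sum_eq_zero fun k hk => ?_
        have hk' := Finset.mem_Icc.mp hk
        have he2 : i + (m - d) + d - k = i + (m - k) := by omega
        rw [he2, ih (m - k) (by omega), mul_zero]
  intro n hn
  have : n = i + (n - i) := by omega
  rw [this]; exact key _

/-- If `f` is governed by a minimal LRF of order `d`, then for every
window length `L ≥ d` and every `i ≥ 0`, the `d` adjacent `L`-lagged vectors
`X_i, X_{i+1}, …, X_{i+d-1}` of `f` are linearly independent. -/
theorem minimal_lrf_adjacent_lagged_vectors_linearIndependent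
    (f : ℕ → ℂ) (d : ℕ)
    (hlrf : SatisfiesLRF f d)
    (hmin : ∀ t : ℕ, t < d → ¬ SatisfiesLRF f t)
    (L : ℕ) (hL : d ≤ L) (i : ℕ) :
    LinearIndependent ℂ (fun k : Fin d => fun l : Fin L => f (i + (k : ℕ) + (l : ℕ))) := by
  rcases Nat.eq_zero_or_pos d with hd0 | hd
  · subst hd0
    exact linearIndependent_empty_type
  obtain ⟨a, had, hrec⟩ := hlrf
  rw [Fintype.linearIndependent_iff]
  intro c hc
  by_contra hne
  push_neg at hne
  obtain ⟨k₀, hk₀⟩ := hne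
  -- extended coefficients
  set cc : ℕ → ℂ := fun k => if h : k < d then c ⟨k, h⟩ else 0 with hcc
  set g : ℕ → ℂ := fun n => ∑ j ∈ range d, cc j * f (n + j) with hg
  have hgrec : ∀ n, g (n + d) = ∑ k ∈ Icc 1 d, a k * g (n + d - k) := fun n =>
    lrf_comb_rec f a d hrec cc d n
  -- the dependence relation kills g on the window
  have h0 : ∀ l, l < L → g (i + l) = 0 := by
    intro l hl
    have hcl := congrFun hc ⟨l, hl⟩
    simp only [Finset.sum_apply, Pi.smul_apply, smul_eq_mul, Pi.zero_apply] at hcl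
    calc g (i + l) = ∑ k : Fin d, c k * f (i + (k : ℕ) + (l : ℕ)) := by
          simp only [hg]
          rw [← Fin.sum_univ_eq_sum_range (fun j => cc j * f (i + l + j)) d]
          refine Finset.sum_congr rfl fun k _ => ?_
          have h1 : cc (k : ℕ) = c k := by
            simp [hcc, k.isLt]
          have h2 : i + l + (k : ℕ) = i + (k : ℕ) + l := by ring
          rw [h1, h2]
      _ = 0 := hcl
  have hzero : ∀ n, i ≤ n → g n = 0 := lrf_forward_zero g a d hd hgrec i L hL h0
  -- extremal nonzero coefficients
  have hccne : cc (k₀ : ℕ) ≠ 0 := by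
    simpa [hcc, k₀.isLt] using hk₀
  set s : Finset ℕ := (range d).filter (fun j => cc j ≠ 0) with hs
  have hsne : s.Nonempty := ⟨(k₀ : ℕ), by simp [hs, k₀.isLt, hccne]⟩
  set m : ℕ := s.max' hsne with hm
  set t₀ : ℕ := s.min' hsne with ht₀
  have hms : m ∈ s := s.max'_mem hsne
  have ht₀s : t₀ ∈ s := s.min'_mem hsne
  have hmlt : m < d := by
    have := Finset.mem_filter.mp hms
    exact Finset.mem_range.mp this.1
  have hccm : cc m ≠ 0 := (Finset.mem_filter.mp hms).2
  have ht₀m : t₀ ≤ m := s.min'_le m hms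
  have hbound : ∀ j, cc j ≠ 0 → t₀ ≤ j ∧ j ≤ m := by
    intro j hj
    by_cases hjd : j < d
    · have hjs : j ∈ s := Finset.mem_filter.mpr ⟨Finset.mem_range.mpr hjd, hj⟩
      exact ⟨s.min'_le j hjs, s.le_max' j hjs⟩
    · exact absurd (by simp [hcc, hjd]) hj
  set t : ℕ := m - t₀ with ht
  have htd : t < d := by omega
  -- the combination giving the shorter LRF
  set b : ℕ → ℂ := fun j => cc (t₀ + j) / cc m with hb
  set H : ℕ → ℂ := fun n => ∑ j ∈ range (t + 1), b j * f (n + j) with hH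
  have hHrec : ∀ n, H (n + d) = ∑ k ∈ Icc 1 d, a k * H (n + d - k) := fun n =>
    lrf_comb_rec f a d hrec b (t + 1) n
  -- H vanishes for n ≥ i + t₀
  have hH0 : ∀ n, i + t₀ ≤ n → H n = 0 := by
    intro n hn
    have hkey : ∑ j ∈ range (t + 1), cc (t₀ + j) * f (n + j) = 0 := by
      have hsub : ∀ j ∈ range (t + 1), cc (t₀ + j) * f (n + j)
          = cc (t₀ + j) * f ((n - t₀) + (t₀ + j)) := by
        intro j _
        congr 2
        omega
      rw [Finset.sum_congr rfl hsub]
      have h1 : ∑ j ∈ range (t + 1), cc (t₀ + j) * f ((n - t₀) + (t₀ + j))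
          = ∑ u ∈ Icc t₀ m, cc u * f ((n - t₀) + u) := by
        rw [← Finset.Ico_add_one_right_eq_Icc, Finset.sum_Ico_eq_sum_range]
        have : m + 1 - t₀ = t + 1 := by omega
        rw [this]
      rw [h1]
      have h2 : ∑ u ∈ Icc t₀ m, cc u * f ((n - t₀) + u)
          = ∑ u ∈ range d, cc u * f ((n - t₀) + u) := by
        refine Finset.sum_subset ?_ ?_
        · intro x hx
          have := Finset.mem_Icc.mp hx
          exact Finset.mem_range.mpr (by omega)
        · intro x _ hx
          have hx0 : cc x = 0 := by
            by_contra hxne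
            exact hx (Finset.mem_Icc.mpr (hbound x hxne))
          rw [hx0, zero_mul]
      rw [h2]
      exact hzero (n - t₀) (by omega)
    simp only [hH]
    have : ∑ j ∈ range (t + 1), b j * f (n + j)
        = (∑ j ∈ range (t + 1), cc (t₀ + j) * f (n + j)) / cc m := by
      rw [Finset.sum_div]
      exact Finset.sum_congr rfl fun j _ => by rw [hb]; ring
    rw [this, hkey, zero_div]
  have hHall : ∀ n, H n = 0 := lrf_backward_zero H a d hd had hHrec (i + t₀) hH0
  -- build the shorter LRF
  set a' : ℕ → ℂ := fun k => if k = 0 then 1 else -(cc (m - k)) / cc m with ha'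
  have ha't : a' t ≠ 0 := by
    rcases Nat.eq_zero_or_pos t with h | h
    · simp [ha', h]
    · have : m - t = t₀ := by omega
      have hcct₀ : cc t₀ ≠ 0 := (Finset.mem_filter.mp ht₀s).2
      simp only [ha', Nat.pos_iff_ne_zero.mp h, if_neg (Nat.pos_iff_ne_zero.mp h), this]
      exact div_ne_zero (neg_ne_zero.mpr hcct₀) hccm
  have hLRF : SatisfiesLRF f t := by
    refine ⟨a', ha't, fun n => ?_⟩
    have hHn := hHall n
    simp only [hH] at hHn
    have hmul : ∑ j ∈ range (t + 1), cc (t₀ + j) * f (n + j) = 0 := by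
      have : ∑ j ∈ range (t + 1), cc (t₀ + j) * f (n + j)
          = cc m * ∑ j ∈ range (t + 1), b j * f (n + j) := by
        rw [Finset.mul_sum]
        refine Finset.sum_congr rfl fun j _ => ?_
        rw [hb]
        field_simp
      rw [this, hHn, mul_zero]
    rw [Finset.sum_range_succ] at hmul
    have hmt : t₀ + t = m := by omega
    rw [hmt] at hmul
    -- f (n + t) = - (∑ j ∈ range t, cc (t₀+j) * f (n+j)) / cc m
    have hft : f (n + t) = -(∑ j ∈ range t, cc (t₀ + j) * f (n + j)) / cc m := by
      field_simp
      linear_combination hmul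
    rw [hft]
    -- now reindex the RHS sum
    have hrhs : ∑ k ∈ Icc 1 t, a' k * f (n + t - k)
        = ∑ j ∈ range t, (-(cc (t₀ + j)) / cc m) * f (n + j) := by
      rw [← Finset.Ico_add_one_right_eq_Icc, Finset.sum_Ico_eq_sum_range]
      have h3 : t + 1 - 1 = t := by omega
      rw [h3]
      rw [← Finset.sum_range_reflect (fun j => (-(cc (t₀ + j)) / cc m) * f (n + j)) t]
      refine Finset.sum_congr rfl fun j hj => ?_
      have hjt : j < t := Finset.mem_range.mp hj
      have e1 : (1 : ℕ) + j ≠ 0 := by omega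
      rw [ha']
      simp only [if_neg e1]
      have e2 : m - (1 + j) = t₀ + (t - 1 - j) := by omega
      have e3 : n + t - (1 + j) = n + (t - 1 - j) := by omega
      rw [e2, e3]
    rw [hrhs, neg_div, Finset.sum_div, ← Finset.sum_neg_distrib]
    refine Finset.sum_congr rfl fun j _ => ?_
    ring
  exact hmin t htd hLRF
end

section
/- Let f : ℕ → ℂ be governed by a minimal LRF of order d with characteristic polynomial P and companion matrix C, let L ≥ d be the window length, and let Y be an L×d matrix whose columns form a basis of the L-trajectory space of f (the span of all L-lagged vectors of f, which has dimension d). Then there exists an invertible d×d matrix P₀ such that D = P₀⁻¹ C P₀ satisfies the shift property Y̅ D = Y̲; in particular, the eigenvalues of this shift matrix D (with multiplicity) coincide with the eigenvalues of C and hence with the roots of the characteristic polynomial P of the LRF. -/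
/-!
The first `d` lagged vectors `X₀, …, X_{d-1}` form a basis of the trajectory space. They span it
because the LRF writes each `Xᵢ` with `i ≥ d` as a combination of the `d` preceding ones. They are
independent because a relation `∑ cⱼ Xⱼ = 0` (with `L ≥ d`) is a solution of the LRF vanishing
at its first `d` terms, hence identically; as `a d ≠ 0` the recurrence can be run backwards, so
the relation can be shifted to start at its first nonzero coefficient and becomes an LRF of
order `< d`. The matrix with columns `X₀, …, X_{d-1}` satisfies the shift property with the
companion matrix `C` itself, and `Y` is obtained from it by an invertible change of basis `P₀`.
-/

open Matrix

/-- The matrix `A` with its last row deleted. -/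
def dropLastRow {L d : ℕ} {α : Type*} (A : Matrix (Fin L) (Fin d) α) :
    Matrix (Fin (L - 1)) (Fin d) α :=
  fun i j => A ⟨i.val, by have := i.isLt; omega⟩ j

/-- The matrix `A` with its first row deleted. -/
def dropFirstRow {L d : ℕ} {α : Type*} (A : Matrix (Fin L) (Fin d) α) :
    Matrix (Fin (L - 1)) (Fin d) α :=
  fun i j => A ⟨i.val + 1, by have := i.isLt; omega⟩ j

namespace LinearRecurrence

variable {R : Type*} [CommSemiring R]

/-- The LRF `u (i + t) = ∑_{k=1}^t a k * u (i + t - k)`; Mathlib's `coeffs j` multiplies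
`u (n + j)`, so it is `a (t - j)`. -/
def ofLRF (t : ℕ) (a : ℕ → R) : LinearRecurrence R := ⟨t, fun j => a (t - j)⟩

theorem isSolution_ofLRF_iff {t : ℕ} {a u : ℕ → R} :
    (ofLRF t a).IsSolution u ↔ ∀ i, u (i + t) = ∑ k ∈ Finset.Icc 1 t, a k * u (i + t - k) := by
  refine forall_congr' fun i => Eq.congr_right ?_
  change ∑ j : Fin t, a (t - j) * u (i + j) = _
  rw [Fin.sum_univ_eq_sum_range (fun j => a (t - j) * u (i + j))]
  refine Finset.sum_nbij' (fun j => t - j) (fun k => t - k) ?_ ?_ ?_ ?_ fun j hj => ?_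
  iterate 4 · intro j hj; simp only [Finset.mem_range, Finset.mem_Icc] at hj ⊢; omega
  rw [Finset.mem_range] at hj
  congr 2; omega

variable {E : LinearRecurrence R} {u : ℕ → R}

theorem IsSolution.shift (hu : E.IsSolution u) (c : ℕ) : E.IsSolution fun n => u (n + c) :=
  fun n => by simpa only [add_right_comm _ c] using hu (n + c)

theorem IsSolution.sum_mul_shift (hu : E.IsSolution u) (s : Finset ℕ) (c : ℕ → R) :
    E.IsSolution fun n => ∑ k ∈ s, c k * u (k + n) := by
  rw [E.is_sol_iff_mem_solSpace]
  convert Submodule.sum_mem _ fun k (_ : k ∈ s) => E.solSpace.smul_mem (c k)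
    ((E.is_sol_iff_mem_solSpace _).1 (hu.shift k)) using 1
  funext n
  simp [Finset.sum_apply, add_comm]

variable [NoZeroDivisors R]

theorem IsSolution.apply_zero_eq_zero (hpos : 0 < E.order) (h0 : E.coeffs ⟨0, hpos⟩ ≠ 0)
    (hu : E.IsSolution u) (hsucc : ∀ n, u (n + 1) = 0) : u 0 = 0 := by
  have hrec := hu 0
  have horder : u E.order = 0 := by rw [← Nat.sub_add_cancel hpos]; exact hsucc _
  rw [Finset.sum_eq_single ⟨0, hpos⟩ (fun i _ hi => ?_) (by simp), zero_add, horder] at hrec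
  · exact (mul_eq_zero.1 hrec.symm).resolve_left h0
  · obtain ⟨k, hk⟩ := Nat.exists_eq_add_of_lt (Nat.pos_of_ne_zero (Fin.val_ne_of_ne hi))
    rw [zero_add, hk, hsucc, mul_zero]

theorem IsSolution.eq_zero_of_shift_eq_zero (hpos : 0 < E.order) (h0 : E.coeffs ⟨0, hpos⟩ ≠ 0)
    (hu : E.IsSolution u) {s : ℕ} (hs : ∀ n, u (n + s) = 0) : u = 0 := by
  induction s with
  | zero => exact funext hs
  | succ s ih =>
    have hus : u s = 0 := by
      simpa using (hu.shift s).apply_zero_eq_zero hpos h0 fun n => by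
        rw [add_right_comm, add_assoc]; exact hs n
    refine ih fun n => ?_
    rcases n with _ | n
    · simpa using hus
    · rw [add_right_comm, add_assoc]; exact hs n

end LinearRecurrence

namespace Matrix

variable {m n p R : Type*} [Fintype n] [CommSemiring R]

theorem eq_of_mul_eq_mul_of_linearIndependent_col {A : Matrix m n R}
    (hA : LinearIndependent R A.col) {M N : Matrix n p R} (h : A * M = A * N) : M = N := by
  ext i j
  have hcol : (A * M).col j = (A * N).col j := congrArg (fun X => X.col j) h
  exact congrFun (mulVec_injective_iff.2 hA hcol) i

theorem exists_mul_eq_of_span_col_le {A : Matrix m n R} {B : Matrix m p R}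
    (h : Submodule.span R (Set.range B.col) ≤ Submodule.span R (Set.range A.col)) :
    ∃ P : Matrix n p R, B = A * P := by
  have hcol (j : p) : ∃ v, A *ᵥ v = B.col j := by
    have : B.col j ∈ LinearMap.range A.mulVecLin := by
      rw [range_mulVecLin]; exact h (Submodule.subset_span ⟨j, rfl⟩)
    exact this
  choose v hv using hcol
  exact ⟨(of v)ᵀ, by ext i j; rw [← col_apply B j i, ← hv j]; rfl⟩

theorem exists_units_mul_eq_of_span_col_eq {K : Type*} [Field K] [DecidableEq n]
    {A B : Matrix m n K}
    (hA : LinearIndependent K A.col)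
    (h : Submodule.span K (Set.range B.col) = Submodule.span K (Set.range A.col)) :
    ∃ P : (Matrix n n K)ˣ, B = A * (P : Matrix n n K) := by
  obtain ⟨P, hP⟩ := exists_mul_eq_of_span_col_le h.le
  obtain ⟨Q, hQ⟩ := exists_mul_eq_of_span_col_le h.ge
  have hPQ : P * Q = 1 := eq_of_mul_eq_mul_of_linearIndependent_col hA <| by
    rw [← Matrix.mul_assoc, ← hP, ← hQ, Matrix.mul_one]
  exact ⟨⟨P, Q, hPQ, mul_eq_one_comm.1 hPQ⟩, hP⟩

end Matrix

section DropRow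

variable {L d e : ℕ} {α : Type*} [NonUnitalNonAssocSemiring α]

theorem dropLastRow_mul (A : Matrix (Fin L) (Fin d) α) (B : Matrix (Fin d) (Fin e) α) :
    dropLastRow (A * B) = dropLastRow A * B := rfl

theorem dropFirstRow_mul (A : Matrix (Fin L) (Fin d) α) (B : Matrix (Fin d) (Fin e) α) :
    dropFirstRow (A * B) = dropFirstRow A * B := rfl

end DropRow

section Trajectory

open LinearRecurrence

variable {R : Type*} [CommSemiring R]

def laggedVector (f : ℕ → R) (L i : ℕ) : Fin L → R := fun l => f (i + l)

def trajectorySpace (f : ℕ → R) (L : ℕ) : Submodule R (Fin L → R) :=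
  Submodule.span R (Set.range (laggedVector f L))

def trajectoryMatrix (f : ℕ → R) (L d : ℕ) : Matrix (Fin L) (Fin d) R :=
  of fun l j => laggedVector f L j l

def companion (d : ℕ) (a : ℕ → R) : Matrix (Fin d) (Fin d) R :=
  of fun i j => if (i : ℕ) = j + 1 then 1 else if (j : ℕ) = d - 1 then a (d - i) else 0

theorem trajectorySpace_eq_span_col {E : LinearRecurrence R} {f : ℕ → R} (hf : E.IsSolution f)
    (L : ℕ) :
    trajectorySpace f L = Submodule.span R (Set.range (trajectoryMatrix f L E.order).col) := by
  refine le_antisymm (Submodule.span_le.2 ?_) (Submodule.span_mono ?_)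
  · rintro _ ⟨i, rfl⟩
    induction i using Nat.strong_induction_on with
    | _ i ih =>
      rcases lt_or_ge i E.order with hi | hi
      · exact Submodule.subset_span ⟨⟨i, hi⟩, rfl⟩
      have hstep : laggedVector f L i = ∑ k, E.coeffs k • laggedVector f L (i - E.order + k) := by
        funext l
        simp only [laggedVector, Finset.sum_apply, Pi.smul_apply, smul_eq_mul]
        rw [show i + l = i - E.order + l + E.order by omega, hf]
        simp only [add_right_comm]
      rw [hstep]
      exact Submodule.sum_mem _ fun k _ =>
        Submodule.smul_mem _ _ (ih _ (by have := k.isLt; omega))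
  · rintro _ ⟨j, rfl⟩
    exact ⟨j, rfl⟩

theorem dropLastRow_trajectoryMatrix_mul_companion {d : ℕ} {a f : ℕ → R}
    (hf : (ofLRF d a).IsSolution f) (L : ℕ) :
    dropLastRow (trajectoryMatrix f L d) * companion d a =
      dropFirstRow (trajectoryMatrix f L d) := by
  ext l j
  simp only [mul_apply, dropLastRow, dropFirstRow, trajectoryMatrix, laggedVector, companion,
    of_apply]
  by_cases hj : (j : ℕ) + 1 < d
  · rw [Finset.sum_eq_single ⟨j + 1, hj⟩ (fun i _ hi => ?_) (by simp)]
    · simp only [if_true, mul_one]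
      congr 1; omega
    · rw [if_neg (fun h => hi (Fin.ext h)), if_neg (by omega), mul_zero]
  · have hrec : f (l + d) = ∑ i : Fin d, a (d - i) * f (l + i) := hf l
    rw [show (j : ℕ) + (l + 1) = l + d by omega, hrec]
    refine Finset.sum_congr rfl fun i _ => ?_
    rw [if_neg (by omega), if_pos (by omega), mul_comm, add_comm (i : ℕ)]

end Trajectory

section Minimality

open LinearRecurrence Finset

variable {f : ℕ → ℂ}

theorem satisfiesLRF_of_sum_mul_shift_eq_zero {m : ℕ} {e : ℕ → ℂ} (h0 : e 0 ≠ 0) (hm : e m ≠ 0)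
    (hrel : ∀ n, ∑ k ∈ range (m + 1), e k * f (k + n) = 0) : SatisfiesLRF f m := by
  refine ⟨fun k => -e (m - k) / e m, by simpa using div_ne_zero h0 hm,
    isSolution_ofLRF_iff.1 fun n => ?_⟩
  change f (n + m) = ∑ j : Fin m, -e (m - (m - j)) / e m * f (n + j)
  have hsum : ∑ j ∈ range m, -e (m - (m - j)) / e m * f (n + j)
      = -(∑ k ∈ range m, e k * f (k + n)) / e m := by
    rw [neg_div, sum_div, ← sum_neg_distrib]
    refine sum_congr rfl fun j hj => ?_
    rw [Nat.sub_sub_self (mem_range.1 hj).le, add_comm n]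
    ring
  have hlead := hrel n
  rw [sum_range_succ] at hlead
  rw [Fin.sum_univ_eq_sum_range (fun j => -e (m - (m - j)) / e m * f (n + j)), hsum,
    eq_neg_of_add_eq_zero_left hlead, neg_neg, add_comm n, mul_div_cancel_left₀ _ hm]

theorem eq_zero_of_sum_mul_shift_eq_zero {d : ℕ} {a : ℕ → ℂ} (hd : 1 ≤ d) (had : a d ≠ 0)
    (hf : (ofLRF d a).IsSolution f) (hmin : ∀ t < d, ¬ SatisfiesLRF f t) {c : ℕ → ℂ}
    (hrel : ∀ n, ∑ j ∈ range d, c j * f (j + n) = 0) : ∀ j < d, c j = 0 := by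
  by_contra! ⟨j₀, hj₀d, hj₀⟩
  obtain ⟨s, t, hst, htd, hs, ht, hsupp⟩ : ∃ s t, s ≤ t ∧ t < d ∧ c s ≠ 0 ∧ c t ≠ 0 ∧
      ∀ j ∈ range d, c j ≠ 0 → s ≤ j ∧ j ≤ t := by
    set S := (range d).filter (c · ≠ 0)
    have hS : S.Nonempty := ⟨j₀, by simp [S, hj₀d, hj₀]⟩
    obtain ⟨hsd, hs⟩ := mem_filter.1 (S.min'_mem hS)
    obtain ⟨htd, ht⟩ := mem_filter.1 (S.max'_mem hS)
    exact ⟨_, _, S.min'_le _ (S.max'_mem hS), mem_range.1 htd, hs, ht, fun j hj hc =>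
      ⟨S.min'_le j (mem_filter.2 ⟨hj, hc⟩), S.le_max' j (mem_filter.2 ⟨hj, hc⟩)⟩⟩
  -- The relation shifted back by `s` vanishes from `s` on, hence everywhere since `a d ≠ 0`;
  -- its extreme coefficients `c s`, `c t` are nonzero, so it is an LRF of order `t - s < d`.
  have hh := hf.sum_mul_shift (range (t - s + 1)) fun k => c (s + k)
  have hvanish : ∀ n, ∑ k ∈ range (t - s + 1), c (s + k) * f (k + (n + s)) = 0 := by
    intro n
    calc ∑ k ∈ range (t - s + 1), c (s + k) * f (k + (n + s))
        = ∑ j ∈ Ico s (t + 1), c j * f (j + n) := by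
          rw [sum_Ico_eq_sum_range, show t + 1 - s = t - s + 1 by omega]
          exact sum_congr rfl fun k _ => by rw [show k + (n + s) = s + k + n by omega]
      _ = ∑ j ∈ range d, c j * f (j + n) := by
          refine sum_subset (fun j hj => by simp only [mem_Ico, mem_range] at hj ⊢; omega)
            fun j hj hjst => ?_
          by_contra hne
          obtain ⟨hsj, hjt⟩ := hsupp j hj (left_ne_zero_of_mul hne)
          exact hjst (mem_Ico.2 ⟨hsj, by omega⟩)
      _ = 0 := hrel n
  have h0 := hh.eq_zero_of_shift_eq_zero (E := ofLRF d a) hd (by simpa [ofLRF] using had) hvanish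
  exact hmin (t - s) (by omega) (satisfiesLRF_of_sum_mul_shift_eq_zero (e := fun k => c (s + k))
    (by simpa using hs) (by rwa [Nat.add_sub_cancel' hst]) fun n => congrFun h0 n)

theorem linearIndependent_trajectoryMatrix_col {d : ℕ} {a : ℕ → ℂ} (hd : 1 ≤ d) (had : a d ≠ 0)
    (hf : (ofLRF d a).IsSolution f) (hmin : ∀ t < d, ¬ SatisfiesLRF f t) {L : ℕ} (hL : d ≤ L) :
    LinearIndependent ℂ (trajectoryMatrix f L d).col := by
  rw [Fintype.linearIndependent_iff]
  intro g hg
  set c : ℕ → ℂ := fun j => if h : j < d then g ⟨j, h⟩ else 0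
  have hc : ∀ j : Fin d, c j = g j := fun j => dif_pos j.isLt
  have hsum : ∀ n, ∑ j ∈ range d, c j * f (j + n) = ∑ j : Fin d, g j * f (j + n) := fun n => by
    simp only [← Fin.sum_univ_eq_sum_range (fun j => c j * f (j + n)), hc]
  have hr := hf.sum_mul_shift (range d) c
  have hrel : (fun n => ∑ j ∈ range d, c j * f (j + n)) = 0 := by
    refine ((ofLRF d a).eq_iff_eqOn_range_order _ 0 hr fun n => by simp).2 fun n hn => ?_
    have := congrFun hg ⟨n, (mem_range.1 hn).trans_le hL⟩
    simpa [hsum, Finset.sum_apply, trajectoryMatrix, laggedVector] using this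
  intro j
  rw [← hc]
  exact eq_zero_of_sum_mul_shift_eq_zero hd had hf hmin (fun n => congrFun hrel n) j j.isLt

end Minimality

theorem trajectory_basis_shift_property_general
    (d : ℕ) (hd : 1 ≤ d) (a : ℕ → ℂ) (had : a d ≠ 0) (f : ℕ → ℂ)
    (hLRF : ∀ i : ℕ, f (i + d) = ∑ k ∈ Finset.Icc 1 d, a k * f (i + d - k))
    (hmin : ∀ t : ℕ, t < d → ¬ SatisfiesLRF f t)
    (C : Matrix (Fin d) (Fin d) ℂ)
    (hC : ∀ i j : Fin d, C i j =
      if (i : ℕ) = (j : ℕ) + 1 then 1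
      else if (j : ℕ) = d - 1 then a (d - (i : ℕ)) else 0)
    (L : ℕ) (hL : d ≤ L)
    (Y : Matrix (Fin L) (Fin d) ℂ)
    (hYspan : Submodule.span ℂ (Set.range (fun j : Fin d => fun l : Fin L => Y l j))
      = Submodule.span ℂ (Set.range (fun i : ℕ => fun l : Fin L => f (i + (l : ℕ))))) :
    ∃ P₀ : Matrix (Fin d) (Fin d) ℂ, IsUnit P₀ ∧
      dropLastRow Y * (P₀⁻¹ * C * P₀) = dropFirstRow Y ∧
      (P₀⁻¹ * C * P₀).charpoly = C.charpoly := by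
  have hf : (LinearRecurrence.ofLRF d a).IsSolution f :=
    LinearRecurrence.isSolution_ofLRF_iff.2 hLRF
  have hCcomp : C = companion d a := Matrix.ext hC
  obtain ⟨P, hYP⟩ := Matrix.exists_units_mul_eq_of_span_col_eq
    (linearIndependent_trajectoryMatrix_col hd had hf hmin hL)
    (hYspan.trans (trajectorySpace_eq_span_col hf L))
  refine ⟨P, P.isUnit, ?_, Matrix.charpoly_units_conj' P C⟩
  rw [hYP, dropLastRow_mul, dropFirstRow_mul, ← dropLastRow_trajectoryMatrix_mul_companion hf,
    ← hCcomp]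
  simp [Matrix.mul_assoc]

/-- Let `f` be governed by a minimal LRF of order `d` with companion
matrix `C` of its characteristic polynomial, let `L ≥ d`, and let `Y` be an `L×d`
matrix whose columns form a basis of the `L`-trajectory space of `f`. Then there is
an invertible matrix `P₀` such that `D = P₀⁻¹ C P₀` satisfies the shift property
`Y̅ D = Y̲`; in particular the eigenvalues of `D` (with multiplicity) coincide with
those of `C`, i.e. with the roots of the characteristic polynomial of the LRF. -/
theorem trajectory_basis_shift_property
    (d : ℕ) (hd : 1 ≤ d) (a : ℕ → ℂ) (had : a d ≠ 0) (f : ℕ → ℂ)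
    (hLRF : ∀ i : ℕ, f (i + d) = ∑ k ∈ Finset.Icc 1 d, a k * f (i + d - k))
    (hmin : ∀ t : ℕ, t < d → ¬ SatisfiesLRF f t)
    (C : Matrix (Fin d) (Fin d) ℂ)
    (hC : ∀ i j : Fin d, C i j =
      if (i : ℕ) = (j : ℕ) + 1 then 1
      else if (j : ℕ) = d - 1 then a (d - (i : ℕ)) else 0)
    (L : ℕ) (hL : d ≤ L)
    (Y : Matrix (Fin L) (Fin d) ℂ)
    (hYli : LinearIndependent ℂ (fun j : Fin d => fun l : Fin L => Y l j))
    (hYspan : Submodule.span ℂ (Set.range (fun j : Fin d => fun l : Fin L => Y l j))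
      = Submodule.span ℂ (Set.range (fun i : ℕ => fun l : Fin L => f (i + (l : ℕ))))) :
    ∃ P₀ : Matrix (Fin d) (Fin d) ℂ, IsUnit P₀ ∧
      dropLastRow Y * (P₀⁻¹ * C * P₀) = dropFirstRow Y ∧
      (P₀⁻¹ * C * P₀).charpoly = C.charpoly :=
  trajectory_basis_shift_property_general d hd a had f hLRF hmin C hC L hL Y hYspan
end

section
/- Let μ_1, …, μ_r be distinct nonzero complex numbers, let L > r, let Z(μ) = (1, μ, μ², …, μ^{L−1})^T ∈ ℂ^L, and let 𝓛 = span{Z(μ_1), …, Z(μ_r)}. Let e_L = (0, …, 0, 1)^T and assume e_L ∉ 𝓛 (equivalently, the orthogonal projection Q of e_L onto 𝓛^⊥ is nonzero; its last coordinate equals ‖Q‖² > 0). Let A = (A_0, …, A_{L−1})^T be Q normalized so that its last coordinate A_{L−1} = −1, and define the polynomial q(z) = Σ_{j=0}^{L−1} conj(A_j) z^j (of degree L−1, with leading coefficient −1). Then q(μ_k) = 0 for every k = 1, …, r, and all the remaining L − 1 − r roots of q (the extraneous roots of the min-norm prediction) lie strictly inside the unit circle, i.e. have modulus less than 1. -/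
/-!
The vector `A = c • Q` has least norm among the vectors `B` orthogonal to every `Z(μ k)` with
`B (L - 1) = -1`: `B - A` is orthogonal to the `Z(μ k)` and to `e_L`, hence to `Q`, and
Pythagoras applies. Read through `q(z) = ∑ conj (A j) z ^ j`, this says that `q` has least
coefficient norm among the polynomials of degree `< L` that vanish at the `μ k` and have the same
coefficient of `X ^ (L - 1)`. If `q = g * (X - z)` with `z` not a `μ k`, then every
`g * (X - w)` is such a competitor, and its conjugated coefficient vector is `X g - conj w • g`.
Minimality in `w` makes `conj z • g` the orthogonal projection of `X g` onto the line through `g`,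
so `‖z‖ = ‖⟪g, X g⟫‖ / ‖g‖ ^ 2 < 1` by the strict Cauchy–Schwarz inequality: `X g` and `g` have
the same norm but are not proportional.
-/

open Polynomial

open scoped InnerProductSpace ComplexConjugate

section InnerProductSpace

variable {𝕜 E : Type*} [RCLike 𝕜] [NormedAddCommGroup E] [InnerProductSpace 𝕜 E]

theorem norm_smul_le_of_inner_eq_zero {s : Set E} {e Q B : E} (c : 𝕜)
    (hQ : ∀ u ∈ s, ⟪u, Q⟫_𝕜 = 0) (heQ : e - Q ∈ Submodule.span 𝕜 s)
    (hB : ∀ u ∈ s, ⟪u, B⟫_𝕜 = 0) (heB : ⟪e, B⟫_𝕜 = ⟪e, c • Q⟫_𝕜) : ‖c • Q‖ ≤ ‖B‖ := by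
  set u := B - c • Q with hu
  have hsu (v : E) (hv : v ∈ s) : ⟪v, u⟫_𝕜 = 0 := by
    simp [u, inner_sub_right, inner_smul_right, hQ v hv, hB v hv]
  have heQu : ⟪e - Q, u⟫_𝕜 = 0 :=
    Submodule.mem_orthogonal_singleton_iff_inner_left.1 <| Submodule.span_le.2
      (fun v hv => Submodule.mem_orthogonal_singleton_iff_inner_left.2 (hsu v hv)) heQ
  have heu : ⟪e, u⟫_𝕜 = 0 := by simp [u, inner_sub_right, heB]
  have hQu : ⟪c • Q, u⟫_𝕜 = 0 := by
    rw [inner_sub_left, heu, zero_sub, neg_eq_zero] at heQu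
    rw [inner_smul_left, heQu, mul_zero]
  have hpyth := norm_add_sq_eq_norm_sq_add_norm_sq_of_inner_eq_zero _ _ hQu
  rw [hu, add_sub_cancel] at hpyth
  exact (mul_self_le_mul_self_iff (norm_nonneg _) (norm_nonneg _)).2
    (hpyth ▸ le_add_of_nonneg_right (mul_self_nonneg _))

theorem eq_inner_div_of_forall_norm_sub_smul_le {x y : E} {z : 𝕜} (hx : x ≠ 0)
    (hmin : ∀ w : 𝕜, ‖y - z • x‖ ≤ ‖y - w • x‖) : z = ⟪x, y⟫_𝕜 / (‖x‖ : 𝕜) ^ 2 := by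
  set w := ⟪x, y⟫_𝕜 / (‖x‖ : 𝕜) ^ 2
  have hx' : (‖x‖ : 𝕜) ≠ 0 := by simpa using hx
  have horth : ⟪y - w • x, (w - z) • x⟫_𝕜 = 0 := by
    rw [inner_smul_right, inner_sub_left, inner_smul_left, inner_self_eq_norm_sq_to_K]
    simp only [w, map_div₀, map_pow, RCLike.conj_ofReal, inner_conj_symm]
    field_simp
    ring
  have hpyth := norm_add_sq_eq_norm_sq_add_norm_sq_of_inner_eq_zero _ _ horth
  rw [show y - w • x + (w - z) • x = y - z • x by rw [sub_smul]; abel] at hpyth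
  have hle := mul_self_le_mul_self (norm_nonneg _) (hmin w)
  have h0 : ‖(w - z) • x‖ = 0 :=
    mul_self_eq_zero.1 (le_antisymm (by linarith) (mul_self_nonneg _))
  exact (sub_eq_zero.1 ((smul_eq_zero.1 (norm_eq_zero.1 h0)).resolve_right hx)).symm

theorem norm_lt_one_of_forall_norm_sub_smul_le {x y : E} {z : 𝕜} (hxy : ‖y‖ = ‖x‖)
    (hy : ∀ r : 𝕜, y ≠ r • x) (hmin : ∀ w : 𝕜, ‖y - z • x‖ ≤ ‖y - w • x‖) : ‖z‖ < 1 := by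
  have hy0 : y ≠ 0 := by simpa using hy 0
  have hx0 : x ≠ 0 := by rintro rfl; simp_all
  have hCS : ‖⟪x, y⟫_𝕜‖ < ‖x‖ * ‖y‖ := by
    refine (norm_inner_le_norm x y).lt_of_ne fun h => ?_
    obtain ⟨r, -, hr⟩ := (norm_inner_eq_norm_iff hx0 hy0).1 h
    exact hy r hr
  rw [eq_inner_div_of_forall_norm_sub_smul_le hx0 hmin, norm_div, norm_pow, RCLike.norm_ofReal,
    abs_norm, div_lt_one (pow_pos (norm_pos_iff.2 hx0) 2)]
  rwa [hxy, ← sq] at hCS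

end InnerProductSpace

section Polynomial

variable {𝕜 : Type*} [RCLike 𝕜]

noncomputable def conjCoeffVec (N : ℕ) (p : 𝕜[X]) : EuclideanSpace 𝕜 (Fin N) :=
  WithLp.toLp 2 fun j => conj (p.coeff j)

@[simp]
theorem conjCoeffVec_apply (N : ℕ) (p : 𝕜[X]) (j : Fin N) :
    conjCoeffVec N p j = conj (p.coeff j) := rfl

noncomputable def powVec (N : ℕ) (x : 𝕜) : EuclideanSpace 𝕜 (Fin N) :=
  WithLp.toLp 2 fun j => x ^ (j : ℕ)

theorem inner_powVec_conjCoeffVec {N : ℕ} {p : 𝕜[X]} (hp : p.natDegree < N) (x : 𝕜) :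
    ⟪powVec N x, conjCoeffVec N p⟫_𝕜 = conj (p.eval x) := by
  rw [eval_eq_sum_range' hp, map_sum, ← Fin.sum_univ_eq_sum_range, PiLp.inner_apply]
  simp [powVec, mul_comm]

theorem conjCoeffVec_mul_X_sub_C (N : ℕ) (g : 𝕜[X]) (w : 𝕜) :
    conjCoeffVec N (g * (X - C w)) = conjCoeffVec N (X * g) - conj w • conjCoeffVec N g := by
  ext j
  simp only [conjCoeffVec_apply, PiLp.sub_apply, PiLp.smul_apply, smul_eq_mul, mul_sub,
    mul_comm g X, coeff_sub, coeff_mul_C, map_sub, map_mul]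
  ring

theorem norm_conjCoeffVec_X_mul {N : ℕ} {g : 𝕜[X]} (hg : g.natDegree + 1 < N) :
    ‖conjCoeffVec N (X * g)‖ = ‖conjCoeffVec N g‖ := by
  obtain ⟨M, rfl⟩ : ∃ M, N = M + 1 := ⟨N - 1, by omega⟩
  have hgM : g.coeff M = 0 := coeff_eq_zero_of_natDegree_lt (by omega)
  simp only [EuclideanSpace.norm_eq, conjCoeffVec_apply, RCLike.norm_conj]
  rw [Fin.sum_univ_succ, Fin.sum_univ_castSucc]
  simp [coeff_X_mul, hgM]

theorem conjCoeffVec_X_mul_ne_smul {N : ℕ} {g : 𝕜[X]} (hg0 : g ≠ 0) (hg : g.natDegree + 1 < N)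
    (r : 𝕜) : conjCoeffVec N (X * g) ≠ r • conjCoeffVec N g := by
  intro h
  have hlead := congrArg (· ⟨g.natDegree + 1, hg⟩) h
  simp only [conjCoeffVec_apply, PiLp.smul_apply, coeff_X_mul, smul_eq_mul,
    coeff_natDegree_succ_eq_zero, map_zero, mul_zero, map_eq_zero] at hlead
  exact hg0 (leadingCoeff_eq_zero.1 hlead)

theorem norm_lt_one_of_forall_norm_conjCoeffVec_le {N : ℕ} {g : 𝕜[X]} (hg0 : g ≠ 0)
    (hg : g.natDegree + 1 < N) {z : 𝕜}
    (hmin : ∀ w, ‖conjCoeffVec N (g * (X - C z))‖ ≤ ‖conjCoeffVec N (g * (X - C w))‖) :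
    ‖z‖ < 1 := by
  rw [← RCLike.norm_conj]
  refine norm_lt_one_of_forall_norm_sub_smul_le (norm_conjCoeffVec_X_mul hg)
    (conjCoeffVec_X_mul_ne_smul hg0 hg) fun w => ?_
  simpa [conjCoeffVec_mul_X_sub_C] using hmin (conj w)

/-- The min-norm prediction polynomial: `conjCoeffVec (n + 1) q` is the paper's vector `A`. -/
structure IsMinNormPoly (n : ℕ) (S : Set 𝕜) (q : 𝕜[X]) : Prop where
  natDegree_le : q.natDegree ≤ n
  eval_eq_zero : ∀ x ∈ S, q.eval x = 0
  norm_le : ∀ p : 𝕜[X], p.natDegree ≤ n → (∀ x ∈ S, p.eval x = 0) → p.coeff n = q.coeff n →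
    ‖conjCoeffVec (n + 1) q‖ ≤ ‖conjCoeffVec (n + 1) p‖

theorem IsMinNormPoly.norm_lt_one {n : ℕ} {S : Set 𝕜} {q : 𝕜[X]} (h : IsMinNormPoly n S q)
    (hq : q.coeff n ≠ 0) {z : 𝕜} (hz : q.IsRoot z) (hzS : z ∉ S) : ‖z‖ < 1 := by
  obtain ⟨g, rfl⟩ : ∃ g, q = g * (X - C z) :=
    (dvd_iff_isRoot.2 hz).imp fun g hg => hg.trans (mul_comm _ _)
  have hg0 : g ≠ 0 := by rintro rfl; simp at hq
  have hdeg (w : 𝕜) : (g * (X - C w)).natDegree = g.natDegree + 1 := by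
    rw [natDegree_mul hg0 (X_sub_C_ne_zero w), natDegree_X_sub_C]
  have hn : g.natDegree + 1 = n :=
    le_antisymm (hdeg z ▸ h.natDegree_le) (hdeg z ▸ le_natDegree_of_ne_zero hq)
  have hcoeff (w : 𝕜) : (g * (X - C w)).coeff n = g.leadingCoeff := by
    rw [← hn, coeff_mul_X_sub_C, coeff_natDegree_succ_eq_zero, zero_mul, sub_zero, leadingCoeff]
  have hgS (x : 𝕜) (hx : x ∈ S) : g.eval x = 0 := by
    have hxz : x - z ≠ 0 := sub_ne_zero.2 fun hxz => hzS (hxz ▸ hx)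
    simpa [hxz] using h.eval_eq_zero x hx
  refine norm_lt_one_of_forall_norm_conjCoeffVec_le hg0 (by omega) fun w =>
    h.norm_le _ (hdeg w ▸ hn.le) (fun x hx => by simp [hgS x hx]) (by rw [hcoeff, hcoeff])

theorem isMinNormPoly_of_conjCoeffVec_eq_smul {n : ℕ} {S : Set 𝕜} {q : 𝕜[X]}
    (hq : q.natDegree ≤ n) {Q : EuclideanSpace 𝕜 (Fin (n + 1))} (c : 𝕜)
    (hQ : ∀ x ∈ S, ⟪powVec (n + 1) x, Q⟫_𝕜 = 0)
    (heQ : EuclideanSpace.single (Fin.last n) 1 - Q ∈ Submodule.span 𝕜 (powVec (n + 1) '' S))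
    (hqQ : conjCoeffVec (n + 1) q = c • Q) : IsMinNormPoly n S q where
  natDegree_le := hq
  eval_eq_zero x hx := by
    simpa [hqQ, inner_smul_right, hQ x hx] using
      (inner_powVec_conjCoeffVec (Nat.lt_succ_of_le hq) x).symm
  norm_le p hp hpS hpn := by
    rw [hqQ]
    refine norm_smul_le_of_inner_eq_zero c (by rintro _ ⟨x, hx, rfl⟩; exact hQ x hx) heQ ?_ ?_
    · rintro _ ⟨x, hx, rfl⟩
      rw [inner_powVec_conjCoeffVec (Nat.lt_succ_of_le hp), hpS x hx, map_zero]
    · rw [← hqQ, EuclideanSpace.inner_single_left, EuclideanSpace.inner_single_left]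
      simp [hpn]

theorem toLp_mem_span_range {ι κ : Type*} [Fintype ι] {f : κ → ι → 𝕜} {v : ι → 𝕜}
    (hv : v ∈ Submodule.span 𝕜 (Set.range f)) :
    (WithLp.toLp 2 v : EuclideanSpace 𝕜 ι) ∈
      Submodule.span 𝕜 (Set.range fun k => WithLp.toLp 2 (f k)) := by
  have := Submodule.apply_mem_span_image_of_mem_span
    (WithLp.linearEquiv 2 𝕜 (ι → 𝕜)).symm.toLinearMap hv
  rwa [← Set.range_comp] at this

end Polynomial

theorem sum_C_mul_X_pow_eq_ofFn {R : Type*} [Semiring R] [DecidableEq R] {n : ℕ}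
    (a : Fin n → R) : ∑ i : Fin n, C (a i) * X ^ (i : ℕ) = ofFn n a := by
  simp_rw [C_mul_X_pow_eq_monomial, ofFn_eq_sum_monomial]

/-- Let `μ 1, …, μ r` be distinct nonzero complex numbers, `L > r`,
`Z(μ) = (1, μ, …, μ^{L-1})`, `𝓛 = span{Z(μ k)}`, and `e_L ∉ 𝓛`. Let `Q` be the
orthogonal projection of `e_L` onto `𝓛^⊥` (so `Q ⊥ 𝓛` and `e_L - Q ∈ 𝓛`), and let
`A` be `Q` scaled so that its last coordinate is `-1`. Then all the signal roots
`μ k` are roots of the min-norm prediction polynomial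
`q(z) = ∑_j conj(A j) z^j`, and every remaining (extraneous) root of `q` lies
strictly inside the unit circle. -/
theorem min_norm_extraneous_roots_inside_unit_circle
    (L r : ℕ) (hLr : r < L)
    (μ : Fin r → ℂ)
    (Z : ℂ → (Fin L → ℂ)) (hZ : ∀ x : ℂ, Z x = fun j : Fin L => x ^ (j : ℕ))
    (eL : Fin L → ℂ) (heL : eL = fun j : Fin L => if (j : ℕ) = L - 1 then (1 : ℂ) else 0)
    (Q : Fin L → ℂ)
    (hQorth : ∀ k : Fin r, ∑ j : Fin L, Q j * starRingEnd ℂ (Z (μ k) j) = 0)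
    (hQproj : eL - Q ∈ Submodule.span ℂ (Set.range fun k : Fin r => Z (μ k)))
    (A : Fin L → ℂ) (c : ℂ) (hA : A = c • Q)
    (hAlast : A ⟨L - 1, by omega⟩ = -1)
    (q : ℂ[X])
    (hq : q = ∑ j : Fin L, C (starRingEnd ℂ (A j)) * X ^ (j : ℕ)) :
    (∀ k : Fin r, q.eval (μ k) = 0) ∧
    ∀ z : ℂ, q.eval z = 0 → (∀ k : Fin r, z ≠ μ k) → ‖z‖ < 1 := by
  obtain ⟨n, rfl⟩ : ∃ n, L = n + 1 := ⟨L - 1, by omega⟩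
  classical
  rw [sum_C_mul_X_pow_eq_ofFn] at hq
  have hqA (j : Fin (n + 1)) : q.coeff j = conj (A j) := by
    rw [hq, ofFn_coeff_eq_val_of_lt _ j.isLt]
  have hZ' (x : ℂ) : powVec (n + 1) x = WithLp.toLp 2 (Z x) := by
    simp [powVec, hZ]
  have heL' : WithLp.toLp 2 eL = EuclideanSpace.single (Fin.last n) 1 := by
    ext j
    simp [heL, PiLp.single_apply, Fin.ext_iff]
  have hmin : IsMinNormPoly n (Set.range μ) q := by
    refine isMinNormPoly_of_conjCoeffVec_eq_smul (Q := WithLp.toLp 2 Q)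
      (hq ▸ Nat.le_of_lt_succ (ofFn_natDegree_lt (by omega) _)) c ?_ ?_ (by ext j; simp [hqA, hA])
    · rintro _ ⟨k, rfl⟩
      simpa [hZ', PiLp.inner_apply, mul_comm] using hQorth k
    · rw [← heL', ← WithLp.toLp_sub, ← Set.range_comp, Function.comp_def]
      simpa only [hZ'] using toLp_mem_span_range hQproj
  have hlead : q.coeff n ≠ 0 := by
    have hqn : q.coeff n = conj (-1) := (hqA (Fin.last n)).trans (congrArg conj hAlast)
    simp [hqn]
  refine ⟨fun k => hmin.eval_eq_zero _ ⟨k, rfl⟩, fun z hz hzμ => hmin.norm_lt_one hlead hz ?_⟩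
  rintro ⟨k, rfl⟩
  exact hzμ k rfl
end

section
/- Let p ≥ 2 be an integer, φ ∈ ℝ, c ∈ ℝ, and consider the time series s_n = cos(2πn/p + φ) and the constant series r_n = c, both of length N. Let L be the window length and K = N − L + 1, and let S and R be the L×K trajectory matrices of (s_n) and (r_n) respectively. If p divides both L and K, then the trajectory matrices are bi-orthogonal: S R^T = 0 and S^T R = 0 (so that the signal and the residual are exactly separable). -/
/-!
The row and column sums of the sinusoid's trajectory matrix are sums of `cos` over whole periods,
i.e. real parts of sums of `p`-th roots of unity, hence vanish. Multiplying by a constant matrix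
only sees these sums.
-/

open Matrix Finset Real

theorem geom_sum_range_mul_eq_zero {K : Type*} [DivisionRing K] {z : K} {p : ℕ}
    (hzp : z ^ p = 1) (hz : z ≠ 1) (m : ℕ) : ∑ j ∈ range (p * m), z ^ j = 0 := by
  rw [geom_sum_eq hz, pow_mul, hzp, one_pow, sub_self, zero_div]

theorem Real.sum_range_cos_add_two_pi_mul_div_eq_zero {p K : ℕ} (hp : 1 < p) (hpK : p ∣ K)
    (θ : ℝ) : ∑ j ∈ range K, Real.cos (θ + 2 * π * j / p) = 0 := by
  obtain ⟨m, rfl⟩ := hpK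
  have hζ := Complex.isPrimitiveRoot_exp p (by omega)
  have hcos : ∀ j : ℕ, Real.cos (θ + 2 * π * j / p)
      = (Complex.exp (θ * Complex.I) * Complex.exp (2 * π * Complex.I / p) ^ j).re := by
    intro j
    rw [← Complex.exp_nat_mul, ← Complex.exp_add, ← Complex.exp_ofReal_mul_I_re]
    congr 2
    push_cast
    ring
  simp_rw [hcos, ← Complex.re_sum, ← mul_sum,
    geom_sum_range_mul_eq_zero hζ.pow_eq_one (hζ.ne_one hp), mul_zero, Complex.zero_re]

theorem Matrix.mul_transpose_eq_zero_of_sum_row_eq_zero {l m n α : Type*} [Fintype n]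
    [NonUnitalNonAssocSemiring α] {S : Matrix l n α} {R : Matrix m n α} {c : α}
    (hS : ∀ i, ∑ j, S i j = 0) (hR : ∀ i j, R i j = c) : S * Rᵀ = 0 := by
  ext i k
  simp only [mul_apply, transpose_apply, hR, ← sum_mul, hS, zero_mul, zero_apply]

theorem sinusoid_constant_biorthogonal_general
    (p : ℕ) (hp : 2 ≤ p) (φ c : ℝ)
    (L : ℕ)
    (K : ℕ)
    (S R : Matrix (Fin L) (Fin K) ℝ)
    (hS : ∀ (i : Fin L) (j : Fin K),
      S i j = Real.cos (2 * Real.pi * ((((i : ℕ) + (j : ℕ) : ℕ) : ℝ)) / (p : ℝ) + φ))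
    (hR : ∀ (i : Fin L) (j : Fin K), R i j = c)
    (hpL : p ∣ L) (hpK : p ∣ K) :
    S * Rᵀ = 0 ∧ Sᵀ * R = 0 := by
  have hperiod : ∀ {n : ℕ}, p ∣ n → ∀ a : ℕ,
      ∑ b : Fin n, Real.cos (2 * Real.pi * ((a + b : ℕ) : ℝ) / p + φ) = 0 := by
    intro n hpn a
    rw [Fin.sum_univ_eq_sum_range (fun b => Real.cos (2 * Real.pi * ((a + b : ℕ) : ℝ) / p + φ)),
      ← Real.sum_range_cos_add_two_pi_mul_div_eq_zero hp hpn (2 * Real.pi * a / p + φ)]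
    refine sum_congr rfl fun b _ => congrArg Real.cos ?_
    push_cast
    ring
  have hrows : ∀ i, ∑ j, S i j = 0 := fun i => by
    simpa only [hS] using hperiod hpK i
  have hcols : ∀ j, ∑ i, Sᵀ j i = 0 := fun j => by
    simpa only [transpose_apply, hS, add_comm] using hperiod hpL j
  refine ⟨mul_transpose_eq_zero_of_sum_row_eq_zero hrows hR, ?_⟩
  simpa only [transpose_transpose] using
    mul_transpose_eq_zero_of_sum_row_eq_zero (R := Rᵀ) hcols (fun i j => hR j i)

/-- Let `s n = cos (2πn/p + φ)` be a sinusoid with integer period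
`p ≥ 2` and let `r n = c` be a constant series, both of length `N`, with window
length `L` and `K = N - L + 1`. If `p` divides both `L` and `K`, then the `L×K`
trajectory matrices `S` and `R` of the two series are bi-orthogonal:
`S Rᵀ = 0` and `Sᵀ R = 0` (exact separability of signal and residual). -/
theorem sinusoid_constant_biorthogonal
    (p : ℕ) (hp : 2 ≤ p) (φ c : ℝ)
    (N L : ℕ) (hL1 : 1 ≤ L) (hLN : L < N)
    (K : ℕ) (hK : K = N - L + 1)
    (S R : Matrix (Fin L) (Fin K) ℝ)
    (hS : ∀ (i : Fin L) (j : Fin K),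
      S i j = Real.cos (2 * Real.pi * ((((i : ℕ) + (j : ℕ) : ℕ) : ℝ)) / (p : ℝ) + φ))
    (hR : ∀ (i : Fin L) (j : Fin K), R i j = c)
    (hpL : p ∣ L) (hpK : p ∣ K) :
    S * Rᵀ = 0 ∧ Sᵀ * R = 0 :=
  sinusoid_constant_biorthogonal_general p hp φ c L K S R hS hR hpL hpK
end
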